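/- arXiv:2310.03054 — 3 statements merged into one kernel-verified Lean document; each statement's English description precedes it below -/
import Mathlib

section
/- Let X, Z be independent ℝ^d-valued random variables and Y an ℝ^n-valued random variable on a common probability space. If T : ℝ^d × ℝ^n → ℝ^d is measurable and the joint law of (T(Z,Y), Y) equals the joint law of (X, Y), then for P_Y-almost every y, the pushforward of the law of Z under T(·, y) equals the conditional law P_{X|Y=y}. -/
/-!
Independence of `Z` and `Y` makes the law of `(Y, T(Z, Y))` the composition-product of the law
of `Y` with the kernel `y ↦ T(·, y)_# P_Z`. By the joint-law hypothesis this is also the law of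
`(Y, X)`, and a kernel disintegrating the law of `(Y, X)` agrees `P_Y`-a.e. with `P_{X|Y}`.
-/

open MeasureTheory ProbabilityTheory Function

namespace ProbabilityTheory.Kernel

variable {α β γ : Type*} [MeasurableSpace α] [MeasurableSpace β] [MeasurableSpace γ]

noncomputable def mapSection (μ : Measure α) (T : α → β → γ) : Kernel β γ :=
  (Kernel.const β μ ×ₖ Kernel.id).map (uncurry T)

instance (μ : Measure α) [IsFiniteMeasure μ] (T : α → β → γ) : IsFiniteKernel (mapSection μ T) :=
  IsFiniteKernel.map _ _

instance (μ : Measure α) [SFinite μ] (T : α → β → γ) : IsSFiniteKernel (mapSection μ T) :=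
  IsSFiniteKernel.map _ _

lemma mapSection_apply (μ : Measure α) [SFinite μ] {T : α → β → γ}
    (hT : Measurable (uncurry T)) (y : β) :
    mapSection μ T y = μ.map (T · y) := by
  rw [mapSection, Kernel.map_apply _ hT, Kernel.prod_apply, Kernel.const_apply, Kernel.id_apply,
    Measure.prod_dirac, Measure.map_map hT measurable_prodMk_right]
  rfl

end ProbabilityTheory.Kernel

open ProbabilityTheory.Kernel

section

variable {α β γ : Type*} [MeasurableSpace α] [MeasurableSpace β] [MeasurableSpace γ]

lemma MeasureTheory.Measure.map_prod_eq_compProd_mapSection (ν : Measure β) (μ : Measure α)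
    [SFinite ν] [SFinite μ] {T : α → β → γ} (hT : Measurable (uncurry T)) :
    (ν.prod μ).map (fun p ↦ (p.1, T p.2 p.1)) = ν ⊗ₘ mapSection μ T := by
  have hg : Measurable fun p : β × α ↦ (p.1, T p.2 p.1) :=
    measurable_fst.prodMk (hT.comp measurable_swap)
  ext s hs
  rw [Measure.map_apply hg hs, Measure.compProd_apply hs, Measure.prod_apply (hg hs)]
  refine lintegral_congr fun y ↦ ?_
  rw [mapSection_apply μ hT y, Measure.map_apply hT.of_uncurry_right
    (measurable_prodMk_left hs)]
  rfl

lemma ProbabilityTheory.IndepFun.map_prodMk_eq_compProd_mapSection {Ω : Type*}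
    [MeasurableSpace Ω] {P : Measure Ω} [IsFiniteMeasure P] {Z : Ω → α} {Y : Ω → β}
    (hZ : Measurable Z) (hY : Measurable Y) (hindep : IndepFun Z Y P) {T : α → β → γ}
    (hT : Measurable (uncurry T)) :
    P.map (fun ω ↦ (Y ω, T (Z ω) (Y ω))) = P.map Y ⊗ₘ mapSection (P.map Z) T := by
  have hg : Measurable fun p : β × α ↦ (p.1, T p.2 p.1) :=
    measurable_fst.prodMk (hT.comp measurable_swap)
  rw [← Measure.map_prod_eq_compProd_mapSection _ _ hT,
    ← (hindep.symm.map_prod_eq_prod_map_map hY.aemeasurable hZ.aemeasurable),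
    Measure.map_map hg (hY.prodMk hZ)]
  rfl

lemma ProbabilityTheory.condDistrib_ae_eq_mapSection [StandardBorelSpace γ] [Nonempty γ]
    {Ω : Type*} [MeasurableSpace Ω] {P : Measure Ω} [IsFiniteMeasure P] {X : Ω → γ} {Z : Ω → α}
    {Y : Ω → β} (hX : Measurable X) (hZ : Measurable Z) (hY : Measurable Y)
    (hindep : IndepFun Z Y P) {T : α → β → γ} (hT : Measurable (uncurry T))
    (hjoint : P.map (fun ω ↦ (T (Z ω) (Y ω), Y ω)) = P.map (fun ω ↦ (X ω, Y ω))) :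
    condDistrib X Y P =ᵐ[P.map Y] mapSection (P.map Z) T := by
  refine condDistrib_ae_eq_of_measure_eq_compProd Y hX.aemeasurable ?_
  have hTZY : Measurable fun ω ↦ T (Z ω) (Y ω) := hT.comp (hZ.prodMk hY)
  have hswap := congrArg (Measure.map Prod.swap) hjoint
  rw [Measure.map_map measurable_swap (hTZY.prodMk hY),
    Measure.map_map measurable_swap (hX.prodMk hY)] at hswap
  exact hswap.symm.trans (hindep.map_prodMk_eq_compProd_mapSection hZ hY hT)

end

/-- **Fundamental principle of conditional generative modelling.**
If `X, Z` are independent `ℝ^d`-valued random variables (here: `Z` independent of `Y`),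
`Y` is `ℝ^n`-valued, `T` is measurable and the joint law of `(T(Z,Y), Y)` equals the joint
law of `(X,Y)`, then for `P_Y`-a.e. `y` the pushforward of the law of `Z` under `T(·,y)`
equals the conditional law `P_{X|Y=y}` (a regular conditional distribution). -/
theorem pushforward_eq_condDistrib (d n : ℕ)
    {Ω : Type*} [MeasurableSpace Ω] (P : Measure Ω) [IsProbabilityMeasure P]
    (X Z : Ω → EuclideanSpace ℝ (Fin d)) (Y : Ω → EuclideanSpace ℝ (Fin n))
    (hX : Measurable X) (hZ : Measurable Z) (hY : Measurable Y)
    (hindep : IndepFun Z Y P)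
    (T : EuclideanSpace ℝ (Fin d) → EuclideanSpace ℝ (Fin n) → EuclideanSpace ℝ (Fin d))
    (hT : Measurable (fun p : EuclideanSpace ℝ (Fin d) × EuclideanSpace ℝ (Fin n) => T p.1 p.2))
    (hjoint : P.map (fun ω => (T (Z ω) (Y ω), Y ω)) = P.map (fun ω => (X ω, Y ω))) :
    ∀ᵐ y ∂(P.map Y),
      (P.map Z).map (fun z => T z y) = condDistrib X Y P y := by
  filter_upwards [condDistrib_ae_eq_mapSection hX hZ hY hindep hT hjoint] with y hy
  rw [hy, mapSection_apply _ hT]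
end

section
/- Let S_d ⊂ ℝ^d be compact, Z an S_d-valued random variable with law P_Z, and F, G ∈ L²(P_Z; ℝ^d). Then for the negative distance kernel K(x,y) = -‖x-y‖, D_K(F_# P_Z, G_# P_Z) ≤ √2 · (E_{z∼P_Z}[‖F(z) - G(z)‖])^{1/2}. -/
open MeasureTheory

/-- Squared MMD of a kernel `k`. -/
noncomputable def mmdSq {E : Type*} [MeasurableSpace E] (k : E → E → ℝ) (μ ν : Measure E) : ℝ :=
  (1 / 2) * ∫ x, ∫ y, k x y ∂μ ∂μ - (∫ x, ∫ y, k x y ∂ν ∂μ) + (1 / 2) * ∫ x, ∫ y, k x y ∂ν ∂ν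

/-- MMD with kernel `k`. -/
noncomputable def mmd {E : Type*} [MeasurableSpace E] (k : E → E → ℝ) (μ ν : Measure E) : ℝ :=
  Real.sqrt (mmdSq k μ ν)

/-!
Realise the two pushforwards through independent copies `z, z'` of `P_Z`: then
`D_K² = E‖F z - G z'‖ - ½ E‖F z - F z'‖ - ½ E‖G z - G z'‖`. Averaging the triangle
inequalities through `F z'` and through `G z` bounds the cross term by half the sum of the other
two plus `E‖F - G‖`, hence `D_K² ≤ E‖F - G‖` and the factor `√2` is not even needed.
-/

theorem two_mul_norm_sub_le {E : Type*} [SeminormedAddCommGroup E] (a b c d : E) :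
    2 * ‖a - d‖ ≤ ‖a - b‖ + ‖c - d‖ + ‖a - c‖ + ‖b - d‖ := by
  linarith [norm_sub_le_norm_sub_add_norm_sub a b d, norm_sub_le_norm_sub_add_norm_sub a c d]

section

variable {α β E E' : Type*} [MeasurableSpace α] [MeasurableSpace β]
  [MeasurableSpace E] [MeasurableSpace E'] {μ : Measure α} {ν : Measure β}

theorem integral_integral_map_map [SFinite μ] [SFinite ν] {F : α → E} {G : β → E'}
    {k : E → E' → ℝ} (hF : AEMeasurable F μ) (hG : AEMeasurable G ν)
    (hk : StronglyMeasurable (Function.uncurry k))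
    (hint : Integrable (fun p : α × β => k (F p.1) (G p.2)) (μ.prod ν)) :
    ∫ x, ∫ y, k x y ∂ν.map G ∂μ.map F = ∫ p, k (F p.1) (G p.2) ∂μ.prod ν := by
  have hk_left (x : E) : StronglyMeasurable (k x) :=
    hk.comp_measurable measurable_prodMk_left
  calc ∫ x, ∫ y, k x y ∂ν.map G ∂μ.map F = ∫ z, ∫ y, k (F z) y ∂ν.map G ∂μ :=
        integral_map hF (hk.integral_prod_right).aestronglyMeasurable
    _ = ∫ z, ∫ w, k (F z) (G w) ∂ν ∂μ := by
        congr with z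
        exact integral_map hG (hk_left _).aestronglyMeasurable
    _ = ∫ p, k (F p.1) (G p.2) ∂μ.prod ν := integral_integral hint

end

section

variable {α E : Type*} [MeasurableSpace α] {μ : Measure α} [NormedAddCommGroup E]

theorem integrable_norm_sub_fst_snd [IsFiniteMeasure μ] {F G : α → E} (hF : Integrable F μ)
    (hG : Integrable G μ) :
    Integrable (fun p : α × α => ‖F p.1 - G p.2‖) (μ.prod μ) :=
  ((hF.norm.comp_fst μ).add (hG.norm.comp_snd μ)).mono'
    ((hF.comp_fst μ).aestronglyMeasurable.sub (hG.comp_snd μ).aestronglyMeasurable).norm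
    (ae_of_all _ fun p => by simpa using norm_sub_le (F p.1) (G p.2))

theorem two_mul_integral_norm_sub_fst_snd_le [IsProbabilityMeasure μ] {F G : α → E}
    (hF : Integrable F μ) (hG : Integrable G μ) :
    2 * ∫ p, ‖F p.1 - G p.2‖ ∂μ.prod μ ≤ ∫ p, ‖F p.1 - F p.2‖ ∂μ.prod μ
      + ∫ p, ‖G p.1 - G p.2‖ ∂μ.prod μ + 2 * ∫ z, ‖F z - G z‖ ∂μ := by
  have hFF := integrable_norm_sub_fst_snd (μ := μ) hF hF
  have hGG := integrable_norm_sub_fst_snd (μ := μ) hG hG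
  have hdiag : Integrable (fun z => ‖F z - G z‖) μ := (hF.sub hG).norm
  calc 2 * ∫ p, ‖F p.1 - G p.2‖ ∂μ.prod μ = ∫ p, 2 * ‖F p.1 - G p.2‖ ∂μ.prod μ :=
        (integral_const_mul _ _).symm
    _ ≤ ∫ p, ‖F p.1 - F p.2‖ + ‖G p.1 - G p.2‖ + ‖F p.1 - G p.1‖ + ‖F p.2 - G p.2‖ ∂μ.prod μ :=
        integral_mono ((integrable_norm_sub_fst_snd hF hG).const_mul 2)
          (((hFF.fun_add hGG).fun_add (hdiag.comp_fst μ)).fun_add (hdiag.comp_snd μ))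
          fun p => two_mul_norm_sub_le _ _ _ _
    _ = _ := by
        rw [integral_add ((hFF.fun_add hGG).fun_add (hdiag.comp_fst μ)) (hdiag.comp_snd μ),
          integral_add (hFF.fun_add hGG) (hdiag.comp_fst μ), integral_add hFF hGG,
          integral_fun_fst (fun z => ‖F z - G z‖), integral_fun_snd (fun z => ‖F z - G z‖)]
        simp only [probReal_univ, one_smul]
        ring

variable [MeasurableSpace E] [BorelSpace E] [SecondCountableTopology E]

theorem integral_integral_neg_norm_sub_map [IsFiniteMeasure μ] {F G : α → E}
    (hF : Integrable F μ) (hG : Integrable G μ) :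
    ∫ x, ∫ y, -‖x - y‖ ∂μ.map G ∂μ.map F = -∫ p, ‖F p.1 - G p.2‖ ∂μ.prod μ := by
  rw [integral_integral_map_map hF.aemeasurable hG.aemeasurable
    (continuous_fst.sub continuous_snd).norm.neg.stronglyMeasurable
    (integrable_norm_sub_fst_snd hF hG).neg, integral_neg]

theorem mmdSq_neg_norm_map_le [IsProbabilityMeasure μ] {F G : α → E}
    (hF : Integrable F μ) (hG : Integrable G μ) :
    mmdSq (fun x y => -‖x - y‖) (μ.map F) (μ.map G) ≤ ∫ z, ‖F z - G z‖ ∂μ := by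
  rw [mmdSq, integral_integral_neg_norm_sub_map hF hF, integral_integral_neg_norm_sub_map hF hG,
    integral_integral_neg_norm_sub_map hG hG]
  linarith [two_mul_integral_norm_sub_fst_snd_le hF hG]

end

theorem mmd_pushforward_le_general (d : ℕ)
    (PZ : Measure (EuclideanSpace ℝ (Fin d))) [IsProbabilityMeasure PZ]
    (F G : EuclideanSpace ℝ (Fin d) → EuclideanSpace ℝ (Fin d))
    (hF : MemLp F 2 PZ) (hG : MemLp G 2 PZ) :
    mmd (fun x y => -‖x - y‖) (PZ.map F) (PZ.map G)
      ≤ Real.sqrt 2 * (∫ z, ‖F z - G z‖ ∂PZ) ^ (1 / 2 : ℝ) := by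
  rw [mmd, ← Real.sqrt_eq_rpow]
  calc Real.sqrt (mmdSq (fun x y => -‖x - y‖) (PZ.map F) (PZ.map G))
      ≤ Real.sqrt (∫ z, ‖F z - G z‖ ∂PZ) :=
        Real.sqrt_le_sqrt (mmdSq_neg_norm_map_le (hF.integrable one_le_two)
          (hG.integrable one_le_two))
    _ ≤ Real.sqrt 2 * Real.sqrt (∫ z, ‖F z - G z‖ ∂PZ) :=
        le_mul_of_one_le_left (Real.sqrt_nonneg _) (Real.one_le_sqrt.mpr one_le_two)

/-- For a random variable `Z` taking values in a compact set `S_d ⊂ ℝ^d` with law `P_Z`, and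
`F, G ∈ L²(P_Z; ℝ^d)`, the MMD with negative distance kernel satisfies
`D_K(F_# P_Z, G_# P_Z) ≤ √2 (E[‖F(z)-G(z)‖])^{1/2}`. -/
theorem mmd_pushforward_le (d : ℕ) (Sd : Set (EuclideanSpace ℝ (Fin d))) (hSd : IsCompact Sd)
    (PZ : Measure (EuclideanSpace ℝ (Fin d))) [IsProbabilityMeasure PZ]
    (hsupp : ∀ᵐ z ∂PZ, z ∈ Sd)
    (F G : EuclideanSpace ℝ (Fin d) → EuclideanSpace ℝ (Fin d))
    (hFmeas : Measurable F) (hGmeas : Measurable G)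
    (hF : MemLp F 2 PZ) (hG : MemLp G 2 PZ) :
    mmd (fun x y => -‖x - y‖) (PZ.map F) (PZ.map G)
      ≤ Real.sqrt 2 * (∫ z, ‖F z - G z‖ ∂PZ) ^ (1 / 2 : ℝ) :=
  mmd_pushforward_le_general d PZ F G hF hG
end

section
/- Fix m ∈ ℕ and 0 < ε < 1/6. Define P_{X,Y} := ½U_{Q_ε(0,0)} + ½U_{Q_ε(m,1)} and P_{X̃,Y} := ½U_{Q_ε(m,0)} + ½U_{Q_ε(0,1)} on ℝ × ℝ, where U_A is the uniform distribution on A and Q_ε(a,b) the ε-ball around (a,b) in the ∞-norm. Then E_{y∼P_Y}[D_K(P_{X̃|Y=y}, P_{X|Y=y})] ≥ √(m - 6ε), where D_K is the MMD with negative distance kernel on ℝ. -/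
open MeasureTheory

/-- Uniform probability measure on the interval `[a,b]`. -/
noncomputable def unifIcc (a b : ℝ) : Measure ℝ :=
  (ENNReal.ofReal (b - a))⁻¹ • volume.restrict (Set.Icc a b)

/-!
Conditioned on `y`, the two posteriors are uniform on intervals of radius `ε` centred at `0` and
`m`. For the negative distance kernel, the triangle inequality bounds every self-interaction term
of `mmdSq` below by minus the diameter `2ε` of the support and the cross term above by
`-(m - 2ε)`, so the squared MMD is at least `m - 4ε ≥ m - 6ε` for every `y`.
-/

open ProbabilityTheory Set Metric

section IntegralBounds

variable {α β : Type*} [MeasurableSpace α] [MeasurableSpace β] {μ : Measure α} {ν : Measure β}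
  {a b : ℝ}

theorem integral_mem_Icc_of_ae_mem [IsProbabilityMeasure μ] {f : α → ℝ} (hf : AEMeasurable f μ)
    (h : ∀ᵐ x ∂μ, f x ∈ Icc a b) : ∫ x, f x ∂μ ∈ Icc a b :=
  (convex_Icc a b).integral_mem isClosed_Icc h (.of_mem_Icc a b hf h)

theorem integral_integral_mem_Icc [IsProbabilityMeasure μ] [IsProbabilityMeasure ν]
    {k : α → β → ℝ} (hk : Measurable (Function.uncurry k)) {s : Set α} {t : Set β}
    (hμ : ∀ᵐ x ∂μ, x ∈ s) (hν : ∀ᵐ y ∂ν, y ∈ t) (hkst : ∀ x ∈ s, ∀ y ∈ t, k x y ∈ Icc a b) :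
    ∫ x, ∫ y, k x y ∂ν ∂μ ∈ Icc a b := by
  refine integral_mem_Icc_of_ae_mem
    hk.stronglyMeasurable.integral_prod_right'.measurable.aemeasurable ?_
  filter_upwards [hμ] with x hx
  exact integral_mem_Icc_of_ae_mem (hk.comp measurable_prodMk_left).aemeasurable
    (hν.mono fun y hy => hkst x hx y hy)

end IntegralBounds

section NegDist

variable {E : Type*} [PseudoMetricSpace E] [MeasurableSpace E] [OpensMeasurableSpace E]
  [SecondCountableTopology E] {μ ν : Measure E} [IsProbabilityMeasure μ] [IsProbabilityMeasure ν]
  {p q : E} {r r' : ℝ}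

theorem integral_integral_neg_dist_mem_Icc (hμ : ∀ᵐ x ∂μ, x ∈ closedBall p r)
    (hν : ∀ᵐ y ∂ν, y ∈ closedBall q r') :
    ∫ x, ∫ y, -dist x y ∂ν ∂μ ∈ Icc (-(dist p q + (r + r'))) (-(dist p q - (r + r'))) := by
  refine integral_integral_mem_Icc continuous_dist.measurable.neg hμ hν fun x hx y hy => ?_
  rw [mem_closedBall] at hx hy
  have hle := dist_triangle4 x p q y
  have hge := dist_triangle4 p x y q
  rw [dist_comm q y] at hle
  rw [dist_comm p x] at hge
  constructor <;> linarith

theorem dist_sub_le_mmdSq_neg_dist (hμ : ∀ᵐ x ∂μ, x ∈ closedBall p r)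
    (hν : ∀ᵐ y ∂ν, y ∈ closedBall q r') :
    dist p q - 2 * (r + r') ≤ mmdSq (fun x y => -dist x y) μ ν := by
  have hμμ := (integral_integral_neg_dist_mem_Icc hμ hμ).1
  have hνν := (integral_integral_neg_dist_mem_Icc hν hν).1
  have hμν := (integral_integral_neg_dist_mem_Icc hμ hν).2
  rw [dist_self] at hμμ hνν
  unfold mmdSq
  linarith

end NegDist

section Uniform

variable {a b : ℝ}

theorem unifIcc_eq_cond : unifIcc a b = volume[|Icc a b] := by
  rw [unifIcc, ProbabilityTheory.cond, Real.volume_Icc]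

theorem isProbabilityMeasure_unifIcc (h : a < b) : IsProbabilityMeasure (unifIcc a b) := by
  rw [unifIcc_eq_cond]
  exact cond_isProbabilityMeasure_of_finite (by simp [h]) (by simp)

theorem ae_mem_unifIcc : ∀ᵐ x ∂unifIcc a b, x ∈ Icc a b := by
  rw [unifIcc_eq_cond]
  exact ae_cond_mem measurableSet_Icc

theorem sqrt_sub_le_mmd_unifIcc (p q : ℝ) {r : ℝ} (hr : 0 < r) :
    √(|p - q| - 4 * r) ≤
      mmd (fun x x' => -|x - x'|) (unifIcc (p - r) (p + r)) (unifIcc (q - r) (q + r)) := by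
  have := isProbabilityMeasure_unifIcc (a := p - r) (b := p + r) (by linarith)
  have := isProbabilityMeasure_unifIcc (a := q - r) (b := q + r) (by linarith)
  have hbound := dist_sub_le_mmdSq_neg_dist (p := p) (q := q) (r := r) (r' := r)
    (Real.closedBall_eq_Icc ▸ ae_mem_unifIcc) (Real.closedBall_eq_Icc ▸ ae_mem_unifIcc)
  simp only [Real.dist_eq] at hbound
  exact Real.sqrt_le_sqrt (by linarith)

end Uniform

theorem expected_posterior_mmd_lower_bound_general (m : ℕ) (ε : ℝ) (hε : 0 < ε) :
    Real.sqrt ((m : ℝ) - 6 * ε) ≤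
      ∫ y, mmd (fun x x' => -|x - x'|)
          (if y < 1 / 2 then unifIcc ((m : ℝ) - ε) ((m : ℝ) + ε) else unifIcc (-ε) ε)
          (if y < 1 / 2 then unifIcc (-ε) ε else unifIcc ((m : ℝ) - ε) ((m : ℝ) + ε))
        ∂((2 : ENNReal)⁻¹ • unifIcc (-ε) ε + (2 : ENNReal)⁻¹ • unifIcc (1 - ε) (1 + ε)) := by
  set k : ℝ → ℝ → ℝ := fun x x' => -|x - x'|
  set A := unifIcc ((m : ℝ) - ε) ((m : ℝ) + ε)
  set B := unifIcc (-ε) ε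
  set P := (2 : ENNReal)⁻¹ • B + (2 : ENNReal)⁻¹ • unifIcc (1 - ε) (1 + ε)
  have hm : |(m : ℝ)| = m := abs_of_nonneg m.cast_nonneg
  have hAB : √((m : ℝ) - 6 * ε) ≤ mmd k A B := by
    have h := sqrt_sub_le_mmd_unifIcc (m : ℝ) 0 hε
    simp only [sub_zero, zero_sub, zero_add, hm] at h
    exact (Real.sqrt_le_sqrt (by linarith)).trans h
  have hBA : √((m : ℝ) - 6 * ε) ≤ mmd k B A := by
    have h := sqrt_sub_le_mmd_unifIcc 0 (m : ℝ) hε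
    simp only [zero_sub, zero_add, abs_neg, hm] at h
    exact (Real.sqrt_le_sqrt (by linarith)).trans h
  have : IsProbabilityMeasure P := by
    have := isProbabilityMeasure_unifIcc (a := -ε) (b := ε) (by linarith)
    have := isProbabilityMeasure_unifIcc (a := 1 - ε) (b := 1 + ε) (by linarith)
    constructor
    simp [P, ENNReal.inv_two_add_inv_two]
  have hite : ∀ y : ℝ, mmd k (if y < 1 / 2 then A else B) (if y < 1 / 2 then B else A) =
      if y < 1 / 2 then mmd k A B else mmd k B A := fun y => by split_ifs <;> rfl
  simp_rw [hite]
  refine (integral_mem_Icc_of_ae_mem (b := max (mmd k A B) (mmd k B A))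
    (measurable_const.ite measurableSet_Iio measurable_const).aemeasurable
    (.of_forall fun y => ?_)).1
  split_ifs
  exacts [⟨hAB, le_max_left _ _⟩, ⟨hBA, le_max_right _ _⟩]

/-- **Counterexample lower bound.** For `m ∈ ℕ` and `0 < ε < 1/6`, with
`P_{X,Y} = ½U_{Q_ε(0,0)} + ½U_{Q_ε(m,1)}` and `P_{X̃,Y} = ½U_{Q_ε(m,0)} + ½U_{Q_ε(0,1)}`
(so that `P_Y = ½U_{[-ε,ε]} + ½U_{[1-ε,1+ε]}`, `P_{X|Y=y} = U_{[-ε,ε]}` for `y` near `0` and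
`U_{[m-ε,m+ε]}` for `y` near `1`, swapped for `X̃`), the expected MMD of the posteriors with
negative distance kernel is at least `√(m - 6ε)`. -/
theorem expected_posterior_mmd_lower_bound (m : ℕ) (ε : ℝ) (hε : 0 < ε) (hε6 : ε < 1 / 6) :
    Real.sqrt ((m : ℝ) - 6 * ε) ≤
      ∫ y, mmd (fun x x' => -|x - x'|)
          (if y < 1 / 2 then unifIcc ((m : ℝ) - ε) ((m : ℝ) + ε) else unifIcc (-ε) ε)
          (if y < 1 / 2 then unifIcc (-ε) ε else unifIcc ((m : ℝ) - ε) ((m : ℝ) + ε))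
        ∂((2 : ENNReal)⁻¹ • unifIcc (-ε) ε + (2 : ENNReal)⁻¹ • unifIcc (1 - ε) (1 + ε)) :=
  expected_posterior_mmd_lower_bound_general m ε hε
end
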